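/- arXiv:2309.09906 — 5 statements merged into one kernel-verified Lean document; each statement's English description precedes it below -/
import Mathlib

section
/- Let X be a vertex-transitive finite graph with vertex set V. Then α(X)·ω(X) ≤ |V|, where α(X) is the maximum size of a coclique and ω(X) is the maximum size of a clique of X. -/
/-- A set of vertices is a coclique (independent set) of a graph. -/
def IsCoclique {V : Type*} (G : SimpleGraph V) (s : Set V) : Prop :=
  ∀ ⦃a⦄, a ∈ s → ∀ ⦃b⦄, b ∈ s → ¬ G.Adj a b

/-- The independence number of a graph: the maximum size of a coclique. -/
noncomputable def indepNum {V : Type*} [Fintype V] (G : SimpleGraph V) : ℕ :=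
  sSup {n | ∃ s : Finset V, IsCoclique G ↑s ∧ s.card = n}

section Aux

variable {V : Type*} [Fintype V] (X : SimpleGraph V)

noncomputable instance : Fintype (X ≃g X) := by
  classical
  exact Fintype.ofInjective (fun g => g.toEquiv) (by
    intro a b h
    ext v
    exact congrArg (fun e => e.toFun v) h)

open Finset in
lemma key_count [DecidableEq V] (hvt : ∀ u v : V, ∃ φ : X ≃g X, φ u = v)
    (S C : Finset V) (hS : IsCoclique X ↑S) (hC : X.IsClique ↑C) :
    S.card * C.card ≤ Fintype.card V := by
  classical
  -- fiber of evaluation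
  set F : V → V → Finset (X ≃g X) := fun c s => univ.filter (fun g => g c = s) with hF
  -- all fibers have the same cardinality
  have hconst : ∀ c s c' s' : V, (F c s).card = (F c' s').card := by
    intro c s c' s'
    obtain ⟨φ₁, hφ₁⟩ := hvt c' c
    obtain ⟨φ₂, hφ₂⟩ := hvt s s'
    apply Finset.card_bij' (fun g _ => (φ₁.trans g).trans φ₂)
      (fun g _ => (φ₁.symm.trans g).trans φ₂.symm)
    · intro g hg
      simp only [hF, mem_filter, mem_univ, true_and] at hg ⊢
      simp [hφ₁, hg, hφ₂]
    · intro g hg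
      simp only [hF, mem_filter, mem_univ, true_and] at hg ⊢
      have h1 : φ₁.symm c = c' := by
        rw [← hφ₁]; exact φ₁.symm_apply_apply c'
      have h2 : φ₂.symm s' = s := by
        rw [← hφ₂]; exact φ₂.symm_apply_apply s
      simp [h1, hg, h2]
    · intro g hg
      ext v
      simp
    · intro g hg
      ext v
      simp
  rcases isEmpty_or_nonempty V with hV | hV
  · have : S = ∅ := Finset.eq_empty_of_isEmpty S
    simp [this]
  obtain ⟨v₀⟩ := hV
  set k := (F v₀ v₀).card with hk
  have hkpos : 0 < k := by
    obtain ⟨φ, hφ⟩ := hvt v₀ v₀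
    exact Finset.card_pos.mpr ⟨φ, by simp [hF, hφ]⟩
  -- |G| = |V| * k
  have hG : Fintype.card (X ≃g X) = Fintype.card V * k := by
    have := Finset.card_eq_sum_card_fiberwise
      (f := fun g : X ≃g X => g v₀) (s := univ) (t := univ) (fun x _ => mem_univ _)
    rw [Finset.card_univ] at this
    rw [this, Finset.sum_congr rfl (fun s _ => (hconst v₀ s v₀ v₀ : _)), Finset.sum_const,
      Finset.card_univ, smul_eq_mul]
  -- each translate of C meets S in at most one point
  have hmeet : ∀ g : X ≃g X, (C.filter (fun c => g c ∈ S)).card ≤ 1 := by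
    intro g
    rw [Finset.card_le_one]
    intro a ha b hb
    simp only [mem_filter] at ha hb
    by_contra hne
    have hadj : X.Adj a b := hC ha.1 hb.1 hne
    have : X.Adj (g a) (g b) := g.map_adj_iff.mpr hadj
    exact hS ha.2 hb.2 this
  -- double count
  have hdc : ∑ g : X ≃g X, (C.filter (fun c => g c ∈ S)).card = C.card * (S.card * k) := by
    calc ∑ g : X ≃g X, (C.filter (fun c => g c ∈ S)).card
        = ∑ g : X ≃g X, ∑ c ∈ C, if g c ∈ S then 1 else 0 :=
          Finset.sum_congr rfl fun g _ => Finset.card_filter _ _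
      _ = ∑ c ∈ C, ∑ g : X ≃g X, if g c ∈ S then 1 else 0 := Finset.sum_comm
      _ = ∑ c ∈ C, (univ.filter (fun g : X ≃g X => g c ∈ S)).card :=
          Finset.sum_congr rfl fun c _ => (Finset.card_filter _ _).symm
      _ = ∑ c ∈ C, ∑ s ∈ S, (F c s).card := by
          refine Finset.sum_congr rfl fun c _ => ?_
          rw [Finset.card_eq_sum_card_fiberwise
            (f := fun g : X ≃g X => g c) (s := univ.filter (fun g : X ≃g X => g c ∈ S)) (t := S)
            (fun g hg => (mem_filter.mp hg).2)]
          refine Finset.sum_congr rfl fun s hs => ?_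
          congr 1
          ext g
          simp only [hF, mem_filter, mem_univ, true_and, and_iff_right_iff_imp]
          intro h; rw [h]; exact hs
      _ = ∑ c ∈ C, ∑ s ∈ S, k := by
          exact Finset.sum_congr rfl fun c _ => Finset.sum_congr rfl fun s _ => hconst c s v₀ v₀
      _ = C.card * (S.card * k) := by simp [mul_assoc, mul_comm]
  have hle : C.card * (S.card * k) ≤ Fintype.card V * k := by
    rw [← hdc, ← hG]
    calc ∑ g : X ≃g X, (C.filter (fun c => g c ∈ S)).card
        ≤ ∑ _g : X ≃g X, 1 := Finset.sum_le_sum fun g _ => hmeet g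
      _ = Fintype.card (X ≃g X) := by simp
  have : S.card * C.card * k ≤ Fintype.card V * k := by
    calc S.card * C.card * k = C.card * (S.card * k) := by ring
      _ ≤ Fintype.card V * k := hle
  exact Nat.le_of_mul_le_mul_right this hkpos

end Aux

/-- The clique-coclique bound: for a vertex-transitive finite graph `X`,
`α(X) · ω(X) ≤ |V|`. -/
theorem clique_coclique_bound {V : Type*} [Fintype V] (X : SimpleGraph V)
    (hvt : ∀ u v : V, ∃ φ : X ≃g X, φ u = v) :
    indepNum X * X.cliqueNum ≤ Fintype.card V := by
  classical
  obtain ⟨C, hC⟩ := X.exists_isNClique_cliqueNum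
  have hα : indepNum X ∈ {n | ∃ s : Finset V, IsCoclique X ↑s ∧ s.card = n} := by
    apply Nat.sSup_mem
    · exact ⟨0, ∅, by simp [IsCoclique], rfl⟩
    · refine ⟨Fintype.card V, fun n hn => ?_⟩
      obtain ⟨s, _, rfl⟩ := hn
      exact Finset.card_le_univ s
  obtain ⟨S, hS, hScard⟩ := hα
  rw [← hScard, ← hC.card_eq]
  exact key_count X hvt S C hS hC.isClique
end

section
/- Let m, n ≥ 2 and k ≥ 1 be integers. The independence number of the graph Γ^k_{m,n}(k) equals max{k, n}. -/
/-- The graph `Γ^k_{m,n}(k)`: vertices are triples `(a,b,c)` with `a ∈ [k]`,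
`b ∈ [m]`, `c ∈ [n]` (the partition of `[k]` is into singletons), and
`(a,b,c) ~ (a',b',c')` iff (`c = c'` and `b ≠ b'`) or (`c ≠ c'` and `a ≠ a'`). -/
def Gamma (k m n : ℕ) : SimpleGraph (Fin k × Fin m × Fin n) where
  Adj v w := (v.2.2 = w.2.2 ∧ v.2.1 ≠ w.2.1) ∨ (v.2.2 ≠ w.2.2 ∧ v.1 ≠ w.1)
  symm := by
    refine ⟨?_⟩
    intro v w h
    rcases h with ⟨h1, h2⟩ | ⟨h1, h2⟩
    · exact Or.inl ⟨h1.symm, h2.symm⟩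
    · exact Or.inr ⟨fun he => h1 he.symm, fun he => h2 he.symm⟩
  loopless := by
    refine ⟨?_⟩
    intro v h
    rcases h with ⟨_, h2⟩ | ⟨h1, _⟩
    · exact h2 rfl
    · exact h1 rfl


/-! A coclique meeting two layers `c ≠ c'` has at most one vertex in each layer: two distinct
nonadjacent vertices of one layer share `b`, hence differ in `a`, and a vertex of another layer
would have to share `a` with both. So a coclique is injective either on the `a`-coordinate (if it
lies in one layer) or on the `c`-coordinate; conversely a row of fixed `b, c` and a column of
fixed `a, b` are cocliques of sizes `k` and `n`. -/

section indepNum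

variable {V : Type*} [Fintype V] {G : SimpleGraph V}

lemma card_le_indepNum {s : Finset V} (hs : IsCoclique G s) : s.card ≤ indepNum G :=
  le_csSup ⟨Fintype.card V, by rintro _ ⟨t, -, rfl⟩; exact t.card_le_univ⟩ ⟨s, hs, rfl⟩

lemma indepNum_le {N : ℕ} (h : ∀ s : Finset V, IsCoclique G s → s.card ≤ N) :
    indepNum G ≤ N :=
  csSup_le ⟨0, ∅, by simp [IsCoclique]⟩ (by rintro _ ⟨s, hs, rfl⟩; exact h s hs)

lemma card_le_indepNum_of_embedding {ι : Type*} [Fintype ι] (f : ι ↪ V)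
    (hf : IsCoclique G (Set.range f)) : Fintype.card ι ≤ indepNum G := by
  rw [← Finset.card_univ, ← Finset.card_map f]
  exact card_le_indepNum (by simpa [Finset.coe_map] using hf)

end indepNum

namespace Gamma

variable {k m n : ℕ} {s : Set (Fin k × Fin m × Fin n)}

lemma isCoclique_range_fst (b : Fin m) (c : Fin n) :
    IsCoclique (Gamma k m n) (Set.range fun a => (a, b, c)) := by
  rintro _ ⟨a, rfl⟩ _ ⟨a', rfl⟩ (⟨-, hb⟩ | ⟨hc, -⟩)
  exacts [hb rfl, hc rfl]

lemma isCoclique_range_third (a : Fin k) (b : Fin m) :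
    IsCoclique (Gamma k m n) (Set.range fun c => (a, b, c)) := by
  rintro _ ⟨c, rfl⟩ _ ⟨c', rfl⟩ (⟨-, hb⟩ | ⟨-, ha⟩)
  exacts [hb rfl, ha rfl]

lemma injOn_fst_of_third_eq (hs : IsCoclique (Gamma k m n) s)
    (hc : ∀ v ∈ s, ∀ w ∈ s, v.2.2 = w.2.2) : s.InjOn Prod.fst := by
  intro v hv w hw ha
  have hb : v.2.1 = w.2.1 := not_not.mp fun hb => hs hv hw (.inl ⟨hc v hv w hw, hb⟩)
  exact Prod.ext ha (Prod.ext hb (hc v hv w hw))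

lemma third_eq_of_ne_of_third_eq (hs : IsCoclique (Gamma k m n) s) {v w : Fin k × Fin m × Fin n}
    (hv : v ∈ s) (hw : w ∈ s) (hvw : v ≠ w) (hc : v.2.2 = w.2.2) :
    ∀ z ∈ s, z.2.2 = v.2.2 := by
  have hb : v.2.1 = w.2.1 := not_not.mp fun hb => hs hv hw (.inl ⟨hc, hb⟩)
  have ha : v.1 ≠ w.1 := fun ha => hvw (Prod.ext ha (Prod.ext hb hc))
  intro z hz
  by_contra hzv
  have hzv' : z.1 = v.1 := not_not.mp fun h => hs hz hv (.inr ⟨hzv, h⟩)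
  have hzw' : z.1 = w.1 := not_not.mp fun h => hs hz hw (.inr ⟨hc ▸ hzv, h⟩)
  exact ha (hzv'.symm.trans hzw')

lemma injOn_third_of_third_ne (hs : IsCoclique (Gamma k m n) s)
    (hc : ∃ u ∈ s, ∃ u' ∈ s, u.2.2 ≠ u'.2.2) : s.InjOn fun v => v.2.2 := by
  obtain ⟨u, hu, u', hu', huu'⟩ := hc
  intro v hv w hw hvw
  by_contra hne
  have hlayer := third_eq_of_ne_of_third_eq hs hv hw hne hvw
  exact huu' ((hlayer u hu).trans (hlayer u' hu').symm)

lemma card_le_max_of_isCoclique {s : Finset (Fin k × Fin m × Fin n)}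
    (hs : IsCoclique (Gamma k m n) s) : s.card ≤ max k n := by
  by_cases hc : ∀ v ∈ s, ∀ w ∈ s, v.2.2 = w.2.2
  · calc s.card ≤ (Finset.univ : Finset (Fin k)).card :=
          Finset.card_le_card_of_injOn _ (fun _ _ => Finset.mem_univ _)
            (injOn_fst_of_third_eq hs hc)
      _ ≤ max k n := by simp
  · push Not at hc
    calc s.card ≤ (Finset.univ : Finset (Fin n)).card :=
          Finset.card_le_card_of_injOn _ (fun _ _ => Finset.mem_univ _)
            (injOn_third_of_third_ne hs hc)
      _ ≤ max k n := by simp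

end Gamma

/-- The independence number of `Γ^k_{m,n}(k)` equals `max {k, n}`. -/
theorem indepNum_Gamma (k m n : ℕ) (hk : 1 ≤ k) (hm : 2 ≤ m) (hn : 2 ≤ n) :
    indepNum (Gamma k m n) = max k n := by
  have a₀ : Fin k := ⟨0, hk⟩
  have b₀ : Fin m := ⟨0, by omega⟩
  have c₀ : Fin n := ⟨0, by omega⟩
  have hrow : k ≤ indepNum (Gamma k m n) := by
    simpa using card_le_indepNum_of_embedding ⟨fun a => (a, b₀, c₀), fun a a' h => by simpa using h⟩
      (Gamma.isCoclique_range_fst b₀ c₀)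
  have hcol : n ≤ indepNum (Gamma k m n) := by
    simpa using card_le_indepNum_of_embedding ⟨fun c => (a₀, b₀, c), fun c c' h => by simpa using h⟩
      (Gamma.isCoclique_range_third a₀ b₀)
  exact le_antisymm (indepNum_le fun _ => Gamma.card_le_max_of_isCoclique) (max_le hrow hcol)
end

section
/- Let G ≤ Sym(Ω) be a finite transitive group admitting a G-invariant partition B and a semi-regular subgroup H ≤ G whose orbit partition equals B. Then ρ(G) ≤ ρ(Ḡ), where Ḡ is the induced (transitive) action of G on B. -/
/-- A subset `F` of a permutation group `G ≤ Sym(X)` is intersecting if any two of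
its elements agree on some point of `X`. -/
def Intersecting {X : Type*} (G : Subgroup (Equiv.Perm X)) (F : Set G) : Prop :=
  ∀ g ∈ F, ∀ h ∈ F, ∃ x : X, (g : Equiv.Perm X) x = (h : Equiv.Perm X) x

/-- The maximum size of an intersecting subset of `G`. -/
noncomputable def maxIntersecting {X : Type*} [Fintype X] (G : Subgroup (Equiv.Perm X)) : ℕ :=
  sSup {n | ∃ F : Set G, Intersecting G F ∧ F.ncard = n}

/-- The intersection density of `G` (with respect to the point `x`). -/
noncomputable def intersectionDensity {X : Type*} [Fintype X]
    (G : Subgroup (Equiv.Perm X)) (x : X) : ℚ :=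
  (maxIntersecting G : ℚ) / (Nat.card (MulAction.stabilizer G x) : ℚ)

lemma bddAbove_intersecting {X : Type*} [Fintype X] (G : Subgroup (Equiv.Perm X)) :
    BddAbove {n | ∃ F : Set G, Intersecting G F ∧ F.ncard = n} := by
  refine ⟨Nat.card G, ?_⟩
  rintro n ⟨F, -, rfl⟩
  have : F.ncard ≤ (Set.univ : Set G).ncard :=
    Set.ncard_le_ncard (Set.subset_univ F) Set.finite_univ
  simpa [Set.ncard_univ] using this

lemma exists_max_intersecting {X : Type*} [Fintype X] (G : Subgroup (Equiv.Perm X)) :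
    ∃ F : Set G, Intersecting G F ∧ F.ncard = maxIntersecting G := by
  have h0 : (0 : ℕ) ∈ {n | ∃ F : Set G, Intersecting G F ∧ F.ncard = n} :=
    ⟨∅, fun g hg => absurd hg (Set.notMem_empty g), by simp⟩
  exact Nat.sSup_mem ⟨0, h0⟩ (bddAbove_intersecting G)

lemma ncard_le_maxIntersecting {X : Type*} [Fintype X] (G : Subgroup (Equiv.Perm X)) {F : Set G}
    (hF : Intersecting G F) : F.ncard ≤ maxIntersecting G :=
  le_csSup (bddAbove_intersecting G) ⟨F, hF, rfl⟩

lemma orbit_stab_card {Ω : Type*} [Fintype Ω] (G : Subgroup (Equiv.Perm Ω))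
    (hG : MulAction.IsPretransitive G Ω) (ω : Ω) :
    Nat.card Ω * Nat.card (MulAction.stabilizer G ω) = Nat.card G := by
  have := Nat.card_congr (MulAction.orbitProdStabilizerEquivGroup G ω)
  rw [Nat.card_prod] at this
  rwa [MulAction.orbit_eq_univ, Nat.card_congr (Equiv.Set.univ Ω)] at this

/-- Let `G ≤ Sym(Ω)` be a finite transitive group with a `G`-invariant partition
`B` (encoded as the fibres of a `G`-equivariant surjection `π : Ω → Λ`, the induced
action on the blocks being given by `φ : G →* Sym(Λ)`), and let `H ≤ G` be a
semi-regular subgroup whose orbit partition equals `B`.  Then `ρ(G) ≤ ρ(Ḡ)`, where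
`Ḡ = φ(G)` is the induced action of `G` on the blocks. -/
theorem density_le_density_quotient {Ω Λ : Type*} [Fintype Ω] [Fintype Λ]
    (G : Subgroup (Equiv.Perm Ω)) (hG : MulAction.IsPretransitive G Ω)
    (π : Ω → Λ) (hπ : Function.Surjective π)
    (φ : G →* Equiv.Perm Λ)
    (hcompat : ∀ (g : G) (ω : Ω), π ((g : Equiv.Perm Ω) ω) = φ g (π ω))
    (H : Subgroup G)
    (hsemi : ∀ h : H, (∃ ω : Ω, ((h : G) : Equiv.Perm Ω) ω = ω) → h = 1)
    (horb : ∀ ω ω' : Ω, π ω = π ω' ↔ ∃ h : H, ((h : G) : Equiv.Perm Ω) ω = ω') :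
    ∀ (ω : Ω) (lam : Λ), intersectionDensity G ω ≤ intersectionDensity φ.range lam := by
  classical
  intro ω lam
  haveI : Nonempty Λ := ⟨lam⟩
  -- transitivity of the induced action
  haveI hT : MulAction.IsPretransitive φ.range Λ := by
    constructor
    intro a b
    obtain ⟨x, rfl⟩ := hπ a
    obtain ⟨y, rfl⟩ := hπ b
    obtain ⟨g, hg⟩ := hG.exists_smul_eq x y
    refine ⟨⟨φ g, g, rfl⟩, ?_⟩
    show φ g (π x) = π y
    rw [← hcompat]
    exact congrArg π hg
  set K : Subgroup G := φ.ker with hKdef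
  -- H is contained in the kernel
  have hHK : H ≤ K := by
    intro h hh
    have : φ h = 1 := by
      ext l
      obtain ⟨x, rfl⟩ := hπ l
      have h1 : π x = π (((h : G) : Equiv.Perm Ω) x) := (horb x _).mpr ⟨⟨h, hh⟩, rfl⟩
      have h2 := hcompat h x
      simp only [Equiv.Perm.coe_one, id_eq]
      rw [← h2, ← h1]
    exact MonoidHom.mem_ker.mpr this
  -- fibres of π all have cardinality |H|
  have hfib : ∀ l : Λ, Nat.card {y : Ω // π y = l} = Nat.card H := by
    intro l
    obtain ⟨x, rfl⟩ := hπ l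
    refine (Nat.card_congr (Equiv.ofBijective
      (fun h : H => (⟨((h : G) : Equiv.Perm Ω) x,
        ((horb x _).mpr ⟨h, rfl⟩).symm⟩ : {y : Ω // π y = π x})) ⟨?_, ?_⟩)).symm
    · intro h₁ h₂ hx
      have hx' : ((h₁ : G) : Equiv.Perm Ω) x = ((h₂ : G) : Equiv.Perm Ω) x :=
        congrArg Subtype.val hx
      have hfix : (((h₂⁻¹ * h₁ : H) : G) : Equiv.Perm Ω) x = x := by
        push_cast
        simp [Equiv.Perm.mul_apply, hx']
      have := hsemi (h₂⁻¹ * h₁) ⟨x, hfix⟩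
      rwa [inv_mul_eq_one, eq_comm] at this
    · rintro ⟨y, hy⟩
      obtain ⟨h, hh⟩ := (horb x y).mp hy.symm
      exact ⟨h, Subtype.ext hh⟩
  -- |Ω| = |Λ| * |H|
  have hcardΩ : Nat.card Ω = Nat.card Λ * Nat.card H := by
    calc Nat.card Ω = Nat.card (Σ l : Λ, {y : Ω // π y = l}) :=
          (Nat.card_congr (Equiv.sigmaFiberEquiv π)).symm
    _ = ∑ l : Λ, Fintype.card {y : Ω // π y = l} := by
          rw [Nat.card_eq_fintype_card, Fintype.card_sigma]
    _ = ∑ _l : Λ, Nat.card H := by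
          refine Finset.sum_congr rfl fun l _ => ?_
          rw [← Nat.card_eq_fintype_card, hfib l]
    _ = Nat.card Λ * Nat.card H := by
          simp [Finset.sum_const, Finset.card_univ, Nat.card_eq_fintype_card, mul_comm]
  -- |G| = |Ḡ| * |K|
  have hGK : Nat.card G = Nat.card φ.range * Nat.card K := by
    rw [Subgroup.card_eq_card_quotient_mul_card_subgroup K]
    congr 1
    exact Nat.card_congr (QuotientGroup.quotientKerEquivRange φ).toEquiv
  -- orbit-stabilizer for both actions
  set s := Nat.card (MulAction.stabilizer G ω) with hs
  set s' := Nat.card (MulAction.stabilizer φ.range lam) with hs'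
  have hOS : Nat.card Ω * s = Nat.card G := orbit_stab_card G hG ω
  have hOS' : Nat.card Λ * s' = Nat.card φ.range := orbit_stab_card φ.range hT lam
  -- key numerical identity : |H| * s = s' * |K|
  have hΛpos : 0 < Nat.card Λ := Nat.card_pos
  have h6 : Nat.card H * s = s' * Nat.card K := by
    have : Nat.card Λ * (Nat.card H * s) = Nat.card Λ * (s' * Nat.card K) := by
      rw [← mul_assoc, ← hcardΩ, hOS, hGK, ← hOS', mul_assoc]
    exact Nat.eq_of_mul_eq_mul_left hΛpos this
  -- a maximal intersecting set in G
  obtain ⟨F, hF, hFcard⟩ := exists_max_intersecting G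
  set e : G → φ.range := fun g => ⟨φ g, g, rfl⟩ with he
  set F' : Set φ.range := e '' F with hF'def
  have hF' : Intersecting φ.range F' := by
    rintro a ⟨g, hg, rfl⟩ b ⟨h, hh, rfl⟩
    obtain ⟨x, hx⟩ := hF g hg h hh
    refine ⟨π x, ?_⟩
    show φ g (π x) = φ h (π x)
    rw [← hcompat, ← hcompat, hx]
  -- the counting injection
  set H' : Subgroup K := H.subgroupOf K with hH'def
  have hcardH' : Nat.card H' = Nat.card H :=
    Nat.card_congr (Subgroup.subgroupOfEquivOfLe hHK).toEquiv
  have hLag : Nat.card K = Nat.card (K ⧸ H') * Nat.card H :=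
    hcardH' ▸ Subgroup.card_eq_card_quotient_mul_card_subgroup H'
  have hchoice : ∀ k : F', ∃ g, g ∈ F ∧ e g = (k : φ.range) := fun k => k.2
  choose g₀ hg₀F hg₀e using hchoice
  have hker : ∀ g : F, (g₀ ⟨e ↑g, Set.mem_image_of_mem e g.2⟩)⁻¹ * (g : G) ∈ K := by
    intro g
    have h1 : φ (g₀ ⟨e ↑g, Set.mem_image_of_mem e g.2⟩) = φ ↑g :=
      congrArg Subtype.val (hg₀e ⟨e ↑g, Set.mem_image_of_mem e g.2⟩)
    exact MonoidHom.mem_ker.mpr (by rw [map_mul, map_inv, h1, inv_mul_cancel])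
  set Φ : F → F' × (K ⧸ H') := fun g =>
    ⟨⟨e ↑g, Set.mem_image_of_mem e g.2⟩,
      QuotientGroup.mk (⟨(g₀ ⟨e ↑g, Set.mem_image_of_mem e g.2⟩)⁻¹ * (g : G), hker g⟩ : K)⟩
    with hΦ
  have hΦinj : Function.Injective Φ := by
    intro g g' hgg
    have h1 : (⟨e ↑g, Set.mem_image_of_mem e g.2⟩ : F')
        = ⟨e ↑g', Set.mem_image_of_mem e g'.2⟩ := congrArg Prod.fst hgg
    have h2 := congrArg Prod.snd hgg
    simp only [hΦ] at h2
    have hgk : g₀ ⟨e ↑g, Set.mem_image_of_mem e g.2⟩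
        = g₀ ⟨e ↑g', Set.mem_image_of_mem e g'.2⟩ := congrArg g₀ h1
    have h3 := Subgroup.mem_subgroupOf.mp (QuotientGroup.eq.mp h2)
    have h4 : ((g : G))⁻¹ * (g' : G) ∈ H := by
      simpa [hgk, mul_inv_rev, mul_assoc] using h3
    obtain ⟨x, hx⟩ := hF ↑g g.2 ↑g' g'.2
    have hfix : (((↑g : G)⁻¹ * ↑g' : G) : Equiv.Perm Ω) x = x := by
      push_cast
      simp [Equiv.Perm.mul_apply, ← hx]
    have h5 := hsemi ⟨_, h4⟩ ⟨x, hfix⟩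
    have h6' : ((g : G))⁻¹ * (g' : G) = 1 := congrArg Subtype.val h5
    exact Subtype.ext (by rwa [inv_mul_eq_one] at h6')
  have hcount : Nat.card F ≤ Nat.card F' * Nat.card (K ⧸ H') := by
    have := Nat.card_le_card_of_injective Φ hΦinj
    rwa [Nat.card_prod] at this
  -- put everything together
  have hineq : F.ncard * Nat.card H ≤ F'.ncard * Nat.card K := by
    rw [← Nat.card_coe_set_eq, ← Nat.card_coe_set_eq, hLag, ← mul_assoc]
    exact Nat.mul_le_mul_right _ hcount
  have hle2 : F'.ncard ≤ maxIntersecting φ.range := ncard_le_maxIntersecting _ hF'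
  have hspos : 0 < s := Nat.card_pos
  have hs'pos : 0 < s' := Nat.card_pos
  have hKpos : 0 < Nat.card K := Nat.card_pos
  unfold intersectionDensity
  rw [div_le_div_iff₀ (by exact_mod_cast hspos) (by exact_mod_cast hs'pos)]
  have hnat : maxIntersecting G * s' ≤ maxIntersecting φ.range * s := by
    have key : maxIntersecting G * s' * Nat.card K
        ≤ maxIntersecting φ.range * s * Nat.card K := by
      calc maxIntersecting G * s' * Nat.card K
          = maxIntersecting G * (s' * Nat.card K) := by ring
        _ = maxIntersecting G * (Nat.card H * s) := by rw [h6]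
        _ = (F.ncard * Nat.card H) * s := by rw [hFcard]; ring
        _ ≤ (F'.ncard * Nat.card K) * s := Nat.mul_le_mul_right _ hineq
        _ ≤ (maxIntersecting φ.range * Nat.card K) * s :=
            Nat.mul_le_mul_right _ (Nat.mul_le_mul_right _ hle2)
        _ = maxIntersecting φ.range * s * Nat.card K := by ring
    exact Nat.le_of_mul_le_mul_right key hKpos
  exact_mod_cast hnat
end

section
/- Let K be a finite group in which any two elements of order 3 commute, and let E be the subgroup generated by all elements of order 3 of K. Suppose every element of K has order dividing 6. Then there exists a right transversal of E in K consisting of the identity and elements of order 2. -/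
/-! Every `g` with `g ^ 6 = 1` satisfies `g = (g ^ 2)⁻¹ * g ^ 3`, where `g ^ 2` has order dividing `3`,
so lies in `E`, and `g ^ 3` has order dividing `2`. Hence `E g = E g ^ 3`, and choosing the cube of a
representative of each right coset gives the transversal. -/

theorem orderOf_pow_eq_one_or_eq_of_dvd_mul {G : Type*} [Monoid G] {g : G} {m p : ℕ}
    (hp : p.Prime) (hg : orderOf g ∣ m * p) : orderOf (g ^ m) = 1 ∨ orderOf (g ^ m) = p := by
  have hpow : (g ^ m) ^ p = 1 := by rw [← pow_mul]; exact orderOf_dvd_iff_pow_eq_one.mp hg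
  exact hp.eq_one_or_self_of_dvd _ (orderOf_dvd_of_pow_eq_one hpow)

theorem pow_two_mem_closure_orderOf_eq_three {G : Type*} [Group G] {g : G} (hg : orderOf g ∣ 6) :
    g ^ 2 ∈ Subgroup.closure {g : G | orderOf g = 3} := by
  rcases orderOf_pow_eq_one_or_eq_of_dvd_mul (m := 2) Nat.prime_three hg with h | h
  · rw [orderOf_eq_one_iff.mp h]
    exact one_mem _
  · exact Subgroup.subset_closure h

theorem Subgroup.exists_isComplement_right_subset_range {G : Type*} [Group G] (H : Subgroup G)
    (φ : G → G) (hφ : ∀ g, g * (φ g)⁻¹ ∈ H) : ∃ T ⊆ Set.range φ, IsComplement (H : Set G) T := by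
  refine ⟨Set.range fun q : Quotient (QuotientGroup.rightRel H) ↦ φ q.out,
    Set.range_comp_subset_range _ _, isComplement_range_right fun q ↦ ?_⟩
  conv_rhs => rw [← q.out_eq']
  exact Quotient.sound' (QuotientGroup.rightRel_apply.mpr (hφ q.out))

theorem exists_right_transversal_of_involutions_general {K : Type*} [Group K]
    (hexp : ∀ g : K, orderOf g ∣ 6)
    (E : Subgroup K) (hE : E = Subgroup.closure {g : K | orderOf g = 3}) :
    ∃ T : Set K, Subgroup.IsComplement (E : Set K) T ∧
      ∀ t ∈ T, t = 1 ∨ orderOf t = 2 := by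
  have hcoset : ∀ g : K, g * (g ^ 3)⁻¹ ∈ E := fun g ↦ by
    have : g * (g ^ 3)⁻¹ = (g ^ 2)⁻¹ := by group
    rw [this, hE]
    exact inv_mem (pow_two_mem_closure_orderOf_eq_three (hexp g))
  obtain ⟨T, hTcubes, hT⟩ := E.exists_isComplement_right_subset_range (· ^ 3) hcoset
  refine ⟨T, hT, fun t ht ↦ ?_⟩
  obtain ⟨g, rfl⟩ := hTcubes ht
  exact (orderOf_pow_eq_one_or_eq_of_dvd_mul (m := 3) Nat.prime_two (hexp g)).imp_left
    orderOf_eq_one_iff.mp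

/-- Let `K` be a finite group in which any two elements of order `3` commute and
every element has order dividing `6`, and let `E` be the subgroup generated by all
elements of order `3`.  Then there is a right transversal of `E` in `K` consisting
of the identity and involutions. -/
theorem exists_right_transversal_of_involutions {K : Type*} [Group K] [Finite K]
    (hcomm : ∀ g h : K, orderOf g = 3 → orderOf h = 3 → g * h = h * g)
    (hexp : ∀ g : K, orderOf g ∣ 6)
    (E : Subgroup K) (hE : E = Subgroup.closure {g : K | orderOf g = 3}) :
    ∃ T : Set K, Subgroup.IsComplement (E : Set K) T ∧
      ∀ t ∈ T, t = 1 ∨ orderOf t = 2 :=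
  exists_right_transversal_of_involutions_general hexp E hE
end

section
/- Let H ≤ Sym(p) be a transitive group of prime degree p and P a Sylow p-subgroup of H. Then P is cyclic of order p, and the normalizer N_H(P) equals P if and only if H = P. -/
/-!
Since `p ∣ |H|` (transitivity) and `|H| ∣ p!`, a Sylow `p`-subgroup `P` has order `p`. If `P` is
self-normalizing then, being abelian, it is central in its normalizer, so Burnside's transfer
theorem gives a normal `p`-complement `K`. An action of prime degree is primitive, so the normal
subgroup `K` acts either trivially or transitively; the latter would force `p ∣ |K|`. Hence `K`
acts trivially, `K = 1` by faithfulness, and `H = P`.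
-/

open MulAction Subgroup Nat

namespace MulAction

variable {G α : Type*} [Group G] [MulAction G α]

theorem card_dvd_card_of_isPretransitive [IsPretransitive G α] [Nonempty α] :
    Nat.card α ∣ Nat.card G := by
  obtain ⟨a⟩ := ‹Nonempty α›
  rw [← index_stabilizer_of_transitive G a]
  exact index_dvd_card _

theorem fixedPoints_eq_univ_of_not_dvd_card [IsPretransitive G α] (hα : (Nat.card α).Prime)
    (K : Subgroup G) [K.Normal] (hK : ¬ Nat.card α ∣ Nat.card K) :
    fixedPoints K α = Set.univ := by
  have : IsPreprimitive G α := .of_prime_card hα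
  have : Nonempty α := Nat.card_pos_iff.mp hα.pos |>.1
  by_contra hK_moves
  have := IsQuasiPreprimitive.isPretransitive_of_normal hK_moves
  exact hK card_dvd_card_of_isPretransitive

theorem eq_bot_of_normal_of_not_dvd_card [IsPretransitive G α] [FaithfulSMul G α]
    (hα : (Nat.card α).Prime) (K : Subgroup G) [K.Normal] (hK : ¬ Nat.card α ∣ Nat.card K) :
    K = ⊥ := by
  have hfix := fixedPoints_eq_univ_of_not_dvd_card hα K hK
  refine (eq_bot_iff_forall K).mpr fun k hk => eq_of_smul_eq_smul (α := α) fun a => ?_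
  rw [one_smul]
  exact (Set.eq_univ_iff_forall.mp hfix a : a ∈ fixedPoints K α) ⟨k, hk⟩

end MulAction

theorem Nat.Prime.not_sq_dvd_factorial {p : ℕ} (hp : p.Prime) : ¬ p ^ 2 ∣ p ! := by
  rw [← Nat.mul_factorial_pred hp.ne_zero, sq, Nat.mul_dvd_mul_iff_left hp.pos, hp.dvd_factorial]
  exact (Nat.sub_one_lt hp.ne_zero).not_ge

namespace Sylow

variable {G : Type*} [Group G] [Finite G] {p : ℕ} [Fact p.Prime]

theorem card_eq_of_dvd_of_not_sq_dvd (P : Sylow p G) (hp : p ∣ Nat.card G)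
    (hp2 : ¬ p ^ 2 ∣ Nat.card G) : Nat.card P = p := by
  have hG : Nat.card G ≠ 0 := Nat.card_pos.ne'
  have hprime : p.Prime := Fact.out
  rw [← pow_one p] at hp
  rw [hprime.pow_dvd_iff_le_factorization hG] at hp hp2
  rw [card_eq_multiplicity, show (Nat.card G).factorization p = 1 by omega, pow_one]

theorem eq_top_of_normalizer_eq_self_of_isPretransitive {α : Type*} [MulAction G α]
    [IsPretransitive G α] [FaithfulSMul G α] (hα : Nat.card α = p) (P : Sylow p G)
    [IsMulCommutative P] (hN : normalizer (P : Set G) = P) : (P : Subgroup G) = ⊤ := by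
  have hNC : normalizer (P : Set G) ≤ centralizer (P : Set G) := hN ▸ le_centralizer _
  have hK : ¬ Nat.card α ∣ Nat.card (MonoidHom.transferSylow P hNC).ker :=
    hα ▸ MonoidHom.not_dvd_card_ker_transferSylow P hNC
  have hα' : (Nat.card α).Prime := hα ▸ Fact.out
  have hcard := (MonoidHom.ker_transferSylow_isComplement' P hNC).card_mul_card
  rw [eq_bot_of_normal_of_not_dvd_card hα' _ hK, card_bot, one_mul] at hcard
  exact eq_top_of_card_eq _ hcard

end Sylow

/-- Let `H ≤ Sym(p)` be a transitive group of prime degree `p` and `P` a Sylow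
`p`-subgroup of `H`.  Then `P` is cyclic of order `p`, and `N_H(P) = P` if and
only if `H = P`. -/
theorem sylow_transitive_prime_degree (p : ℕ) (hp : p.Prime)
    (H : Subgroup (Equiv.Perm (Fin p)))
    (hH : MulAction.IsPretransitive H (Fin p))
    (P : Sylow p H) :
    IsCyclic (P : Subgroup H) ∧ Nat.card (P : Subgroup H) = p ∧
      (Subgroup.normalizer ((P : Subgroup H) : Set H) = (P : Subgroup H) ↔ (P : Subgroup H) = ⊤) := by
  have := Fact.mk hp
  have hdeg : Nat.card (Fin p) = p := Nat.card_fin p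
  have hpH : p ∣ Nat.card H := hdeg.symm.dvd.trans card_dvd_card_of_isPretransitive
  have hHdvd : Nat.card H ∣ p ! := by
    simpa [Fintype.card_perm] using card_subgroup_dvd_card H
  have hcard := P.card_eq_of_dvd_of_not_sq_dvd hpH fun h => hp.not_sq_dvd_factorial (h.trans hHdvd)
  have hcyc := isCyclic_of_prime_card hcard
  refine ⟨hcyc, hcard, fun hN => P.eq_top_of_normalizer_eq_self_of_isPretransitive hdeg hN, ?_⟩
  rintro hP
  rw [hP]
  exact normalizer_eq_top ⊤
end
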